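/- arXiv:2102.11495 — 2 statements merged into one kernel-verified Lean document; each statement's English description precedes it below -/
import Mathlib

section
/- Let x, w, a, b be random variables taking values in finite sets with a joint probability mass function, and suppose a and b are conditionally independent given (x, w). If I(b; x | (a, w)) > I(a; x | w), then I(x; (b, w)) > I(x; (a, w)). -/
open Finset

/-- A probability mass function on a finite type. -/
def IsPMF {Ω : Type*} [Fintype Ω] (μ : Ω → ℝ) : Prop :=
  (∀ ω, 0 ≤ μ ω) ∧ ∑ ω, μ ω = 1

/-- The probability that the random variable `f` takes the value `a`. -/
def pr {Ω A : Type*} [Fintype Ω] [DecidableEq A] (μ : Ω → ℝ) (f : Ω → A) (a : A) : ℝ :=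
  ∑ ω, if f ω = a then μ ω else 0

/-- Mutual information `I(f; g)`; terms with zero joint probability contribute `0`. -/
noncomputable def mi {Ω A B : Type*} [Fintype Ω] [Fintype A] [Fintype B]
    [DecidableEq A] [DecidableEq B] (μ : Ω → ℝ) (f : Ω → A) (g : Ω → B) : ℝ :=
  ∑ a : A, ∑ b : B,
    pr μ (fun ω => (f ω, g ω)) (a, b) *
      Real.log (pr μ (fun ω => (f ω, g ω)) (a, b) / (pr μ f a * pr μ g b))

/-- Conditional mutual information `I(f; g | h)`. -/
noncomputable def cmi {Ω A B C : Type*} [Fintype Ω] [Fintype A] [Fintype B] [Fintype C]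
    [DecidableEq A] [DecidableEq B] [DecidableEq C]
    (μ : Ω → ℝ) (f : Ω → A) (g : Ω → B) (h : Ω → C) : ℝ :=
  ∑ c : C, ∑ a : A, ∑ b : B,
    pr μ (fun ω => ((f ω, g ω), h ω)) ((a, b), c) *
      Real.log (pr μ (fun ω => ((f ω, g ω), h ω)) ((a, b), c) * pr μ h c /
        (pr μ (fun ω => (f ω, h ω)) (a, c) * pr μ (fun ω => (g ω, h ω)) (b, c)))

/-- `f` and `g` are conditionally independent given `h`. -/
def CondIndepRV {Ω A B C : Type*} [Fintype Ω] [DecidableEq A] [DecidableEq B] [DecidableEq C]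
    (μ : Ω → ℝ) (f : Ω → A) (g : Ω → B) (h : Ω → C) : Prop :=
  ∀ a b c, 0 < pr μ h c →
    pr μ (fun ω => ((f ω, g ω), h ω)) ((a, b), c) * pr μ h c =
      pr μ (fun ω => (f ω, h ω)) (a, c) * pr μ (fun ω => (g ω, h ω)) (b, c)

/-- Entropy `H(f)`. -/
noncomputable def ent {Ω A : Type*} [Fintype Ω] [Fintype A] [DecidableEq A]
    (μ : Ω → ℝ) (f : Ω → A) : ℝ :=
  -∑ a : A, pr μ f a * Real.log (pr μ f a)

/-- Conditional entropy `H(f | g)`. -/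
noncomputable def condEnt {Ω A B : Type*} [Fintype Ω] [Fintype A] [Fintype B]
    [DecidableEq A] [DecidableEq B] (μ : Ω → ℝ) (f : Ω → A) (g : Ω → B) : ℝ :=
  -∑ a : A, ∑ b : B,
    pr μ (fun ω => (f ω, g ω)) (a, b) *
      Real.log (pr μ (fun ω => (f ω, g ω)) (a, b) / pr μ g b)

/-- The joint pmf of `(x, z)` induced by the data pmf `pd` and the encoder `q`. -/
def joint {X Z : Type*} (pd : X → ℝ) (q : X → Z → ℝ) : X × Z → ℝ :=
  fun ω => pd ω.1 * q ω.1 ω.2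

/-- The first `i` coordinates `z_{≤ i}` of a vector `z ∈ V^K`. -/
def trunc {V : Type*} {K : ℕ} (i : ℕ) (h : i ≤ K) (v : Fin K → V) : Fin i → V :=
  fun j => v (Fin.castLE h j)

/-- `- log x` valued in the extended reals, with `- log 0 = ⊤`. -/
noncomputable def negLog (x : ℝ) : EReal := if x = 0 then ⊤ else ((-Real.log x : ℝ) : EReal)

/-- An encoder is a conditional pmf `q(z | x)`. -/
def IsEncoder {X Z : Type*} [Fintype Z] (q : X → Z → ℝ) : Prop :=
  ∀ a, (∀ v, 0 ≤ q a v) ∧ ∑ v, q a v = 1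

/-- A decoder is a family of conditional pmfs `p_i(x | z_{≤ i})`, `i = 1, …, K`. -/
def IsDecoder {X V : Type*} [Fintype X] (K : ℕ) (d : (i : ℕ) → (Fin i → V) → X → ℝ) : Prop :=
  ∀ i, 1 ≤ i → i ≤ K → ∀ zc : Fin i → V, (∀ a, 0 ≤ d i zc a) ∧ ∑ a, d i zc a = 1

/-- The objective `L(q, {p_i}) = (1/K) ∑_{i=1}^K E[- log p_i(x | z_{≤ i})]`. -/
noncomputable def objL {X V : Type*} [Fintype X] [Fintype V] (K : ℕ)
    (pd : X → ℝ) (q : X → (Fin K → V) → ℝ) (d : (i : ℕ) → (Fin i → V) → X → ℝ) : EReal :=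
  ((1 / K : ℝ) : EReal) *
    ∑ i : Fin K, ∑ a : X, ∑ v : Fin K → V,
      ((pd a * q a v : ℝ) : EReal) * negLog (d (i.1 + 1) (trunc (i.1 + 1) i.isLt v) a)

section PrLemmas
variable {Ω D E : Type*} [Fintype Ω] [DecidableEq D] [DecidableEq E]

theorem pr_nonneg' (μ : Ω → ℝ) (hμ : ∀ ω, 0 ≤ μ ω) (f : Ω → D) (d : D) : 0 ≤ pr μ f d := by
  refine Finset.sum_nonneg fun ω _ => ?_
  split
  · exact hμ ω
  · exact le_rfl

theorem pr_congr' (μ : Ω → ℝ) {f : Ω → D} {g : Ω → E} {d : D} {e : E}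
    (h : ∀ ω, f ω = d ↔ g ω = e) : pr μ f d = pr μ g e :=
  Finset.sum_congr rfl fun ω _ => if_congr (h ω) rfl rfl

theorem pr_fst' [Fintype E] (μ : Ω → ℝ) (F : Ω → D) (G : Ω → E) (d : D) :
    ∑ e, pr μ (fun ω => (F ω, G ω)) (d, e) = pr μ F d := by
  unfold pr
  rw [Finset.sum_comm]
  refine Finset.sum_congr rfl fun ω _ => ?_
  by_cases h : F ω = d
  · simp [Prod.ext_iff, h]
  · simp [Prod.ext_iff, h]

theorem pr_pair_le_fst' (μ : Ω → ℝ) (hμ : ∀ ω, 0 ≤ μ ω) (F : Ω → D) (G : Ω → E) (d : D) (e : E) :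
    pr μ (fun ω => (F ω, G ω)) (d, e) ≤ pr μ F d := by
  refine Finset.sum_le_sum fun ω _ => ?_
  dsimp only
  by_cases h : (F ω, G ω) = (d, e)
  · rw [if_pos h, if_pos (congrArg Prod.fst h)]
  · rw [if_neg h]
    split
    · exact hμ ω
    · exact le_rfl

end PrLemmas

theorem sum3_comm {α β γ M : Type*} [Fintype α] [Fintype β] [Fintype γ] [AddCommMonoid M]
    (F : α → β → γ → M) :
    ∑ a, ∑ b, ∑ c, F a b c = ∑ c, ∑ b, ∑ a, F a b c := by
  calc ∑ a, ∑ b, ∑ c, F a b c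
      = ∑ a, ∑ c, ∑ b, F a b c := Finset.sum_congr rfl fun a _ => Finset.sum_comm
    _ = ∑ c, ∑ a, ∑ b, F a b c := Finset.sum_comm
    _ = ∑ c, ∑ b, ∑ a, F a b c := Finset.sum_congr rfl fun c _ => Finset.sum_comm

theorem sum3_cycle {α β γ M : Type*} [Fintype α] [Fintype β] [Fintype γ] [AddCommMonoid M]
    (F : α → β → γ → M) :
    ∑ a, ∑ b, ∑ c, F a b c = ∑ c, ∑ a, ∑ b, F a b c := by
  calc ∑ a, ∑ b, ∑ c, F a b c
      = ∑ a, ∑ c, ∑ b, F a b c := Finset.sum_congr rfl fun a _ => Finset.sum_comm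
    _ = ∑ c, ∑ a, ∑ b, F a b c := Finset.sum_comm

theorem log_split3 {J Px Pw Pgw Pxw : ℝ} (hJ : 0 < J) (hx : 0 < Px) (hw : 0 < Pw)
    (hgw : 0 < Pgw) (hxw : 0 < Pxw) :
    J * Real.log (J / (Px * Pgw)) =
      J * Real.log (Pxw / (Px * Pw)) + J * Real.log (J * Pw / (Pgw * Pxw)) := by
  rw [Real.log_div hJ.ne' (by positivity), Real.log_div hxw.ne' (by positivity),
      Real.log_div (by positivity) (by positivity),
      Real.log_mul hx.ne' hgw.ne', Real.log_mul hx.ne' hw.ne',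
      Real.log_mul hJ.ne' hw.ne', Real.log_mul hgw.ne' hxw.ne']
  ring

theorem log_split4 {J Pw Pbw Pxgw Pbxw Pxw : ℝ} (hJ : 0 < J) (hw : 0 < Pw) (hbw : 0 < Pbw)
    (hxgw : 0 < Pxgw) (hbxw : 0 < Pbxw) (hxw : 0 < Pxw) :
    J * Real.log (J * Pw / (Pbw * Pxgw)) =
      J * Real.log (Pbxw * Pw / (Pbw * Pxw)) + J * Real.log (J * Pxw / (Pbxw * Pxgw)) := by
  rw [Real.log_div (by positivity) (by positivity), Real.log_div (by positivity) (by positivity),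
      Real.log_div (by positivity) (by positivity),
      Real.log_mul hJ.ne' hw.ne', Real.log_mul hbw.ne' hxgw.ne',
      Real.log_mul hbxw.ne' hw.ne', Real.log_mul hbw.ne' hxw.ne',
      Real.log_mul hJ.ne' hxw.ne', Real.log_mul hbxw.ne' hxgw.ne']
  ring

theorem sub_le_mul_log {P q : ℝ} (hP : 0 < P) (hq : 0 < q) : P - q ≤ P * Real.log (P / q) := by
  have h := Real.log_le_sub_one_of_pos (show (0:ℝ) < q / P by positivity)
  rw [Real.log_div hq.ne' hP.ne'] at h
  rw [Real.log_div hP.ne' hq.ne']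
  have h2 : P * (Real.log q - Real.log P) ≤ q - P := by
    calc P * (Real.log q - Real.log P) ≤ P * (q / P - 1) := by
          exact mul_le_mul_of_nonneg_left h hP.le
      _ = q - P := by field_simp
  nlinarith


theorem mi_chain {Ω X A W : Type*} [Fintype Ω] [Fintype X] [Fintype A] [Fintype W]
    [DecidableEq X] [DecidableEq A] [DecidableEq W]
    (μ : Ω → ℝ) (hμ : ∀ ω, 0 ≤ μ ω) (x : Ω → X) (g : Ω → A) (w : Ω → W) :
    mi μ x (fun ω => (g ω, w ω)) = mi μ x w + cmi μ g x w := by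
  have hsum : ∀ u r, ∑ s, pr μ (fun ω => (x ω, (g ω, w ω))) (u, (s, r))
      = pr μ (fun ω => (x ω, w ω)) (u, r) := by
    intro u r
    have e : ∀ s : A, pr μ (fun ω => (x ω, (g ω, w ω))) (u, (s, r))
        = pr μ (fun ω => ((x ω, w ω), g ω)) ((u, r), s) := fun s =>
      pr_congr' μ (fun ω => by simp only [Prod.ext_iff]; tauto)
    rw [Finset.sum_congr rfl (fun s _ => e s)]
    exact pr_fst' μ (fun ω => (x ω, w ω)) g (u, r)
  have hsplit : ∀ u s r,
      pr μ (fun ω => (x ω, (g ω, w ω))) (u, (s, r)) *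
        Real.log (pr μ (fun ω => (x ω, (g ω, w ω))) (u, (s, r)) /
          (pr μ x u * pr μ (fun ω => (g ω, w ω)) (s, r))) =
      pr μ (fun ω => (x ω, (g ω, w ω))) (u, (s, r)) *
        Real.log (pr μ (fun ω => (x ω, w ω)) (u, r) / (pr μ x u * pr μ w r)) +
      pr μ (fun ω => ((g ω, x ω), w ω)) ((s, u), r) *
        Real.log (pr μ (fun ω => ((g ω, x ω), w ω)) ((s, u), r) * pr μ w r /
          (pr μ (fun ω => (g ω, w ω)) (s, r) * pr μ (fun ω => (x ω, w ω)) (u, r))) := by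
    intro u s r
    have e1 : pr μ (fun ω => ((g ω, x ω), w ω)) ((s, u), r)
        = pr μ (fun ω => (x ω, (g ω, w ω))) (u, (s, r)) :=
      pr_congr' μ (fun ω => by simp only [Prod.ext_iff]; tauto)
    rw [e1]
    rcases eq_or_lt_of_le (pr_nonneg' μ hμ (fun ω => (x ω, (g ω, w ω))) (u, (s, r))) with h0 | h0
    · rw [← h0]; ring
    · have hx : 0 < pr μ x u :=
        lt_of_lt_of_le h0 (pr_pair_le_fst' μ hμ x (fun ω => (g ω, w ω)) u (s, r))
      have hgw : 0 < pr μ (fun ω => (g ω, w ω)) (s, r) := lt_of_lt_of_le h0 (by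
        rw [show pr μ (fun ω => (x ω, (g ω, w ω))) (u, (s, r))
            = pr μ (fun ω => ((g ω, w ω), x ω)) ((s, r), u) from
          pr_congr' μ (fun ω => by simp only [Prod.ext_iff]; tauto)]
        exact pr_pair_le_fst' μ hμ (fun ω => (g ω, w ω)) x (s, r) u)
      have hxw : 0 < pr μ (fun ω => (x ω, w ω)) (u, r) := lt_of_lt_of_le h0 (by
        rw [show pr μ (fun ω => (x ω, (g ω, w ω))) (u, (s, r))
            = pr μ (fun ω => ((x ω, w ω), g ω)) ((u, r), s) from
          pr_congr' μ (fun ω => by simp only [Prod.ext_iff]; tauto)]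
        exact pr_pair_le_fst' μ hμ (fun ω => (x ω, w ω)) g (u, r) s)
      have hw : 0 < pr μ w r := lt_of_lt_of_le hxw (by
        rw [show pr μ (fun ω => (x ω, w ω)) (u, r)
            = pr μ (fun ω => (w ω, x ω)) (r, u) from
          pr_congr' μ (fun ω => by simp only [Prod.ext_iff]; tauto)]
        exact pr_pair_le_fst' μ hμ w x r u)
      exact log_split3 h0 hx hw hgw hxw
  unfold mi cmi
  simp only [Fintype.sum_prod_type]
  calc ∑ u, ∑ s, ∑ r,
        pr μ (fun ω => (x ω, (g ω, w ω))) (u, (s, r)) *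
          Real.log (pr μ (fun ω => (x ω, (g ω, w ω))) (u, (s, r)) /
            (pr μ x u * pr μ (fun ω => (g ω, w ω)) (s, r)))
      = ∑ u, ∑ s, ∑ r,
        (pr μ (fun ω => (x ω, (g ω, w ω))) (u, (s, r)) *
          Real.log (pr μ (fun ω => (x ω, w ω)) (u, r) / (pr μ x u * pr μ w r)) +
        pr μ (fun ω => ((g ω, x ω), w ω)) ((s, u), r) *
          Real.log (pr μ (fun ω => ((g ω, x ω), w ω)) ((s, u), r) * pr μ w r /
            (pr μ (fun ω => (g ω, w ω)) (s, r) * pr μ (fun ω => (x ω, w ω)) (u, r)))) := by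
        exact Finset.sum_congr rfl fun u _ => Finset.sum_congr rfl fun s _ =>
          Finset.sum_congr rfl fun r _ => hsplit u s r
    _ = (∑ u, ∑ s, ∑ r,
          pr μ (fun ω => (x ω, (g ω, w ω))) (u, (s, r)) *
            Real.log (pr μ (fun ω => (x ω, w ω)) (u, r) / (pr μ x u * pr μ w r))) +
        (∑ u, ∑ s, ∑ r,
          pr μ (fun ω => ((g ω, x ω), w ω)) ((s, u), r) *
            Real.log (pr μ (fun ω => ((g ω, x ω), w ω)) ((s, u), r) * pr μ w r /
              (pr μ (fun ω => (g ω, w ω)) (s, r) * pr μ (fun ω => (x ω, w ω)) (u, r)))) := by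
        simp [Finset.sum_add_distrib]
    _ = (∑ u, ∑ r,
          pr μ (fun ω => (x ω, w ω)) (u, r) *
            Real.log (pr μ (fun ω => (x ω, w ω)) (u, r) / (pr μ x u * pr μ w r))) +
        (∑ r, ∑ s, ∑ u,
          pr μ (fun ω => ((g ω, x ω), w ω)) ((s, u), r) *
            Real.log (pr μ (fun ω => ((g ω, x ω), w ω)) ((s, u), r) * pr μ w r /
              (pr μ (fun ω => (g ω, w ω)) (s, r) * pr μ (fun ω => (x ω, w ω)) (u, r)))) := by
        congr 1
        · refine Finset.sum_congr rfl fun u _ => ?_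
          rw [Finset.sum_comm]
          refine Finset.sum_congr rfl fun r _ => ?_
          rw [← Finset.sum_mul, hsum u r]
        · exact sum3_comm _


theorem cmi_chain {Ω X A W B : Type*} [Fintype Ω] [Fintype X] [Fintype A] [Fintype W] [Fintype B]
    [DecidableEq X] [DecidableEq A] [DecidableEq W] [DecidableEq B]
    (μ : Ω → ℝ) (hμ : ∀ ω, 0 ≤ μ ω) (b : Ω → B) (x : Ω → X) (g : Ω → A) (w : Ω → W) :
    cmi μ b (fun ω => (x ω, g ω)) w = cmi μ b x w + cmi μ b g (fun ω => (x ω, w ω)) := by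
  have hsum : ∀ r t u, ∑ s, pr μ (fun ω => ((b ω, (x ω, g ω)), w ω)) ((t, (u, s)), r)
      = pr μ (fun ω => ((b ω, x ω), w ω)) ((t, u), r) := by
    intro r t u
    have e : ∀ s : A, pr μ (fun ω => ((b ω, (x ω, g ω)), w ω)) ((t, (u, s)), r)
        = pr μ (fun ω => (((b ω, x ω), w ω), g ω)) (((t, u), r), s) := fun s =>
      pr_congr' μ (fun ω => by simp only [Prod.ext_iff]; tauto)
    rw [Finset.sum_congr rfl (fun s _ => e s)]
    exact pr_fst' μ (fun ω => ((b ω, x ω), w ω)) g ((t, u), r)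
  have hsplit : ∀ r t u s,
      pr μ (fun ω => ((b ω, (x ω, g ω)), w ω)) ((t, (u, s)), r) *
        Real.log (pr μ (fun ω => ((b ω, (x ω, g ω)), w ω)) ((t, (u, s)), r) * pr μ w r /
          (pr μ (fun ω => (b ω, w ω)) (t, r) * pr μ (fun ω => ((x ω, g ω), w ω)) ((u, s), r))) =
      pr μ (fun ω => ((b ω, (x ω, g ω)), w ω)) ((t, (u, s)), r) *
        Real.log (pr μ (fun ω => ((b ω, x ω), w ω)) ((t, u), r) * pr μ w r /
          (pr μ (fun ω => (b ω, w ω)) (t, r) * pr μ (fun ω => (x ω, w ω)) (u, r))) +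
      pr μ (fun ω => ((b ω, g ω), (x ω, w ω))) ((t, s), (u, r)) *
        Real.log (pr μ (fun ω => ((b ω, g ω), (x ω, w ω))) ((t, s), (u, r)) *
            pr μ (fun ω => (x ω, w ω)) (u, r) /
          (pr μ (fun ω => (b ω, (x ω, w ω))) (t, (u, r)) *
            pr μ (fun ω => (g ω, (x ω, w ω))) (s, (u, r)))) := by
    intro r t u s
    have e1 : pr μ (fun ω => ((b ω, g ω), (x ω, w ω))) ((t, s), (u, r))
        = pr μ (fun ω => ((b ω, (x ω, g ω)), w ω)) ((t, (u, s)), r) :=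
      pr_congr' μ (fun ω => by simp only [Prod.ext_iff]; tauto)
    have e2 : pr μ (fun ω => (b ω, (x ω, w ω))) (t, (u, r))
        = pr μ (fun ω => ((b ω, x ω), w ω)) ((t, u), r) :=
      pr_congr' μ (fun ω => by simp only [Prod.ext_iff]; tauto)
    have e3 : pr μ (fun ω => (g ω, (x ω, w ω))) (s, (u, r))
        = pr μ (fun ω => ((x ω, g ω), w ω)) ((u, s), r) :=
      pr_congr' μ (fun ω => by simp only [Prod.ext_iff]; tauto)
    rw [e1, e2, e3]
    rcases eq_or_lt_of_le
        (pr_nonneg' μ hμ (fun ω => ((b ω, (x ω, g ω)), w ω)) ((t, (u, s)), r)) with h0 | h0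
    · rw [← h0]; ring
    · have hw : 0 < pr μ w r := lt_of_lt_of_le h0 (by
        rw [show pr μ (fun ω => ((b ω, (x ω, g ω)), w ω)) ((t, (u, s)), r)
            = pr μ (fun ω => (w ω, (b ω, (x ω, g ω)))) (r, (t, (u, s))) from
          pr_congr' μ (fun ω => by simp only [Prod.ext_iff]; tauto)]
        exact pr_pair_le_fst' μ hμ w _ r (t, (u, s)))
      have hbw : 0 < pr μ (fun ω => (b ω, w ω)) (t, r) := lt_of_lt_of_le h0 (by
        rw [show pr μ (fun ω => ((b ω, (x ω, g ω)), w ω)) ((t, (u, s)), r)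
            = pr μ (fun ω => ((b ω, w ω), (x ω, g ω))) ((t, r), (u, s)) from
          pr_congr' μ (fun ω => by simp only [Prod.ext_iff]; tauto)]
        exact pr_pair_le_fst' μ hμ (fun ω => (b ω, w ω)) _ (t, r) (u, s))
      have hxgw : 0 < pr μ (fun ω => ((x ω, g ω), w ω)) ((u, s), r) := lt_of_lt_of_le h0 (by
        rw [show pr μ (fun ω => ((b ω, (x ω, g ω)), w ω)) ((t, (u, s)), r)
            = pr μ (fun ω => (((x ω, g ω), w ω), b ω)) (((u, s), r), t) from
          pr_congr' μ (fun ω => by simp only [Prod.ext_iff]; tauto)]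
        exact pr_pair_le_fst' μ hμ (fun ω => ((x ω, g ω), w ω)) b ((u, s), r) t)
      have hbxw : 0 < pr μ (fun ω => ((b ω, x ω), w ω)) ((t, u), r) := lt_of_lt_of_le h0 (by
        rw [show pr μ (fun ω => ((b ω, (x ω, g ω)), w ω)) ((t, (u, s)), r)
            = pr μ (fun ω => (((b ω, x ω), w ω), g ω)) (((t, u), r), s) from
          pr_congr' μ (fun ω => by simp only [Prod.ext_iff]; tauto)]
        exact pr_pair_le_fst' μ hμ (fun ω => ((b ω, x ω), w ω)) g ((t, u), r) s)
      have hxw : 0 < pr μ (fun ω => (x ω, w ω)) (u, r) := lt_of_lt_of_le h0 (by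
        rw [show pr μ (fun ω => ((b ω, (x ω, g ω)), w ω)) ((t, (u, s)), r)
            = pr μ (fun ω => ((x ω, w ω), (b ω, g ω))) ((u, r), (t, s)) from
          pr_congr' μ (fun ω => by simp only [Prod.ext_iff]; tauto)]
        exact pr_pair_le_fst' μ hμ (fun ω => (x ω, w ω)) _ (u, r) (t, s))
      exact log_split4 h0 hw hbw hxgw hbxw hxw
  unfold cmi
  simp only [Fintype.sum_prod_type]
  calc ∑ r, ∑ t, ∑ u, ∑ s,
        pr μ (fun ω => ((b ω, (x ω, g ω)), w ω)) ((t, (u, s)), r) *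
          Real.log (pr μ (fun ω => ((b ω, (x ω, g ω)), w ω)) ((t, (u, s)), r) * pr μ w r /
            (pr μ (fun ω => (b ω, w ω)) (t, r) * pr μ (fun ω => ((x ω, g ω), w ω)) ((u, s), r)))
      = ∑ r, ∑ t, ∑ u, ∑ s,
        (pr μ (fun ω => ((b ω, (x ω, g ω)), w ω)) ((t, (u, s)), r) *
          Real.log (pr μ (fun ω => ((b ω, x ω), w ω)) ((t, u), r) * pr μ w r /
            (pr μ (fun ω => (b ω, w ω)) (t, r) * pr μ (fun ω => (x ω, w ω)) (u, r))) +
        pr μ (fun ω => ((b ω, g ω), (x ω, w ω))) ((t, s), (u, r)) *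
          Real.log (pr μ (fun ω => ((b ω, g ω), (x ω, w ω))) ((t, s), (u, r)) *
              pr μ (fun ω => (x ω, w ω)) (u, r) /
            (pr μ (fun ω => (b ω, (x ω, w ω))) (t, (u, r)) *
              pr μ (fun ω => (g ω, (x ω, w ω))) (s, (u, r))))) := by
        exact Finset.sum_congr rfl fun r _ => Finset.sum_congr rfl fun t _ =>
          Finset.sum_congr rfl fun u _ => Finset.sum_congr rfl fun s _ => hsplit r t u s
    _ = (∑ r, ∑ t, ∑ u, ∑ s,
          pr μ (fun ω => ((b ω, (x ω, g ω)), w ω)) ((t, (u, s)), r) *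
            Real.log (pr μ (fun ω => ((b ω, x ω), w ω)) ((t, u), r) * pr μ w r /
              (pr μ (fun ω => (b ω, w ω)) (t, r) * pr μ (fun ω => (x ω, w ω)) (u, r)))) +
        (∑ r, ∑ t, ∑ u, ∑ s,
          pr μ (fun ω => ((b ω, g ω), (x ω, w ω))) ((t, s), (u, r)) *
            Real.log (pr μ (fun ω => ((b ω, g ω), (x ω, w ω))) ((t, s), (u, r)) *
                pr μ (fun ω => (x ω, w ω)) (u, r) /
              (pr μ (fun ω => (b ω, (x ω, w ω))) (t, (u, r)) *
                pr μ (fun ω => (g ω, (x ω, w ω))) (s, (u, r))))) := by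
        simp [Finset.sum_add_distrib]
    _ = (∑ r, ∑ t, ∑ u,
          pr μ (fun ω => ((b ω, x ω), w ω)) ((t, u), r) *
            Real.log (pr μ (fun ω => ((b ω, x ω), w ω)) ((t, u), r) * pr μ w r /
              (pr μ (fun ω => (b ω, w ω)) (t, r) * pr μ (fun ω => (x ω, w ω)) (u, r)))) +
        (∑ u, ∑ r, ∑ t, ∑ s,
          pr μ (fun ω => ((b ω, g ω), (x ω, w ω))) ((t, s), (u, r)) *
            Real.log (pr μ (fun ω => ((b ω, g ω), (x ω, w ω))) ((t, s), (u, r)) *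
                pr μ (fun ω => (x ω, w ω)) (u, r) /
              (pr μ (fun ω => (b ω, (x ω, w ω))) (t, (u, r)) *
                pr μ (fun ω => (g ω, (x ω, w ω))) (s, (u, r))))) := by
        congr 1
        · refine Finset.sum_congr rfl fun r _ => Finset.sum_congr rfl fun t _ =>
            Finset.sum_congr rfl fun u _ => ?_
          rw [← Finset.sum_mul, hsum r t u]
        · exact sum3_cycle _


theorem cmi_swap {Ω X A W B : Type*} [Fintype Ω] [Fintype X] [Fintype A] [Fintype W] [Fintype B]
    [DecidableEq X] [DecidableEq A] [DecidableEq W] [DecidableEq B]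
    (μ : Ω → ℝ) (b : Ω → B) (x : Ω → X) (g : Ω → A) (w : Ω → W) :
    cmi μ b (fun ω => (x ω, g ω)) w = cmi μ b (fun ω => (g ω, x ω)) w := by
  unfold cmi
  simp only [Fintype.sum_prod_type]
  refine Finset.sum_congr rfl fun r _ => Finset.sum_congr rfl fun t _ => ?_
  rw [Finset.sum_comm]
  refine Finset.sum_congr rfl fun s _ => Finset.sum_congr rfl fun u _ => ?_
  have e1 : pr μ (fun ω => ((b ω, (x ω, g ω)), w ω)) ((t, (u, s)), r)
      = pr μ (fun ω => ((b ω, (g ω, x ω)), w ω)) ((t, (s, u)), r) :=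
    pr_congr' μ (fun ω => by simp only [Prod.ext_iff]; tauto)
  have e2 : pr μ (fun ω => ((x ω, g ω), w ω)) ((u, s), r)
      = pr μ (fun ω => ((g ω, x ω), w ω)) ((s, u), r) :=
    pr_congr' μ (fun ω => by simp only [Prod.ext_iff]; tauto)
  rw [e1, e2]

theorem cmi_nonneg {Ω X B C : Type*} [Fintype Ω] [Fintype X] [Fintype B] [Fintype C]
    [DecidableEq X] [DecidableEq B] [DecidableEq C]
    (μ : Ω → ℝ) (hμ : ∀ ω, 0 ≤ μ ω) (f : Ω → X) (g : Ω → B) (h : Ω → C) :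
    0 ≤ cmi μ f g h := by
  unfold cmi
  refine Finset.sum_nonneg fun c _ => ?_
  rcases eq_or_lt_of_le (pr_nonneg' μ hμ h c) with hc | hc
  · refine Finset.sum_nonneg fun a _ => Finset.sum_nonneg fun b _ => ?_
    have hz : pr μ (fun ω => ((f ω, g ω), h ω)) ((a, b), c) = 0 := by
      refine le_antisymm ?_ (pr_nonneg' μ hμ _ _)
      rw [show pr μ (fun ω => ((f ω, g ω), h ω)) ((a, b), c)
          = pr μ (fun ω => (h ω, (f ω, g ω))) (c, (a, b)) from
        pr_congr' μ (fun ω => by simp only [Prod.ext_iff]; tauto), hc]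
      exact pr_pair_le_fst' μ hμ h _ c (a, b)
    rw [hz]; simp
  · have key : ∀ a b,
        pr μ (fun ω => ((f ω, g ω), h ω)) ((a, b), c) -
          pr μ (fun ω => (f ω, h ω)) (a, c) * pr μ (fun ω => (g ω, h ω)) (b, c) / pr μ h c ≤
        pr μ (fun ω => ((f ω, g ω), h ω)) ((a, b), c) *
          Real.log (pr μ (fun ω => ((f ω, g ω), h ω)) ((a, b), c) * pr μ h c /
            (pr μ (fun ω => (f ω, h ω)) (a, c) * pr μ (fun ω => (g ω, h ω)) (b, c))) := by
      intro a b
      rcases eq_or_lt_of_le (pr_nonneg' μ hμ (fun ω => ((f ω, g ω), h ω)) ((a, b), c))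
        with h0 | h0
      · rw [← h0]
        simp only [zero_mul, zero_sub, neg_nonpos]
        exact div_nonneg (mul_nonneg (pr_nonneg' μ hμ _ _) (pr_nonneg' μ hμ _ _)) hc.le
      · have hac : 0 < pr μ (fun ω => (f ω, h ω)) (a, c) := lt_of_lt_of_le h0 (by
          rw [show pr μ (fun ω => ((f ω, g ω), h ω)) ((a, b), c)
              = pr μ (fun ω => ((f ω, h ω), g ω)) ((a, c), b) from
            pr_congr' μ (fun ω => by simp only [Prod.ext_iff]; tauto)]
          exact pr_pair_le_fst' μ hμ (fun ω => (f ω, h ω)) g (a, c) b)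
        have hbc : 0 < pr μ (fun ω => (g ω, h ω)) (b, c) := lt_of_lt_of_le h0 (by
          rw [show pr μ (fun ω => ((f ω, g ω), h ω)) ((a, b), c)
              = pr μ (fun ω => ((g ω, h ω), f ω)) ((b, c), a) from
            pr_congr' μ (fun ω => by simp only [Prod.ext_iff]; tauto)]
          exact pr_pair_le_fst' μ hμ (fun ω => (g ω, h ω)) f (b, c) a)
        have hq : 0 < pr μ (fun ω => (f ω, h ω)) (a, c) * pr μ (fun ω => (g ω, h ω)) (b, c)
            / pr μ h c := div_pos (mul_pos hac hbc) hc
        have harg : pr μ (fun ω => ((f ω, g ω), h ω)) ((a, b), c) * pr μ h c /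
            (pr μ (fun ω => (f ω, h ω)) (a, c) * pr μ (fun ω => (g ω, h ω)) (b, c)) =
            pr μ (fun ω => ((f ω, g ω), h ω)) ((a, b), c) /
            (pr μ (fun ω => (f ω, h ω)) (a, c) * pr μ (fun ω => (g ω, h ω)) (b, c) / pr μ h c) := by
          field_simp
        rw [harg]
        exact sub_le_mul_log h0 hq
    calc (0:ℝ) = pr μ h c - pr μ h c := by ring
      _ ≤ ∑ a, ∑ b, (pr μ (fun ω => ((f ω, g ω), h ω)) ((a, b), c) -
            pr μ (fun ω => (f ω, h ω)) (a, c) * pr μ (fun ω => (g ω, h ω)) (b, c) / pr μ h c) := by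
          have m1 : ∑ a, ∑ b, pr μ (fun ω => ((f ω, g ω), h ω)) ((a, b), c) = pr μ h c := by
            have e : ∀ a : X, ∑ b, pr μ (fun ω => ((f ω, g ω), h ω)) ((a, b), c)
                = pr μ (fun ω => (f ω, h ω)) (a, c) := by
              intro a
              have e' : ∀ b : B, pr μ (fun ω => ((f ω, g ω), h ω)) ((a, b), c)
                  = pr μ (fun ω => ((f ω, h ω), g ω)) ((a, c), b) := fun b' =>
                pr_congr' μ (fun ω => by simp only [Prod.ext_iff]; tauto)
              rw [Finset.sum_congr rfl (fun b' _ => e' b')]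
              exact pr_fst' μ (fun ω => (f ω, h ω)) g (a, c)
            rw [Finset.sum_congr rfl (fun a _ => e a)]
            have e2 : ∀ a : X, pr μ (fun ω => (f ω, h ω)) (a, c)
                = pr μ (fun ω => (h ω, f ω)) (c, a) := fun a =>
              pr_congr' μ (fun ω => by simp only [Prod.ext_iff]; tauto)
            rw [Finset.sum_congr rfl (fun a _ => e2 a)]
            exact pr_fst' μ h f c
          have m2 : ∑ a, ∑ b, pr μ (fun ω => (f ω, h ω)) (a, c) *
              pr μ (fun ω => (g ω, h ω)) (b, c) / pr μ h c = pr μ h c := by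
            have mg : ∑ b, pr μ (fun ω => (g ω, h ω)) (b, c) = pr μ h c := by
              have e2 : ∀ b' : B, pr μ (fun ω => (g ω, h ω)) (b', c)
                  = pr μ (fun ω => (h ω, g ω)) (c, b') := fun b' =>
                pr_congr' μ (fun ω => by simp only [Prod.ext_iff]; tauto)
              rw [Finset.sum_congr rfl (fun b' _ => e2 b')]
              exact pr_fst' μ h g c
            have mf : ∑ a, pr μ (fun ω => (f ω, h ω)) (a, c) = pr μ h c := by
              have e2 : ∀ a : X, pr μ (fun ω => (f ω, h ω)) (a, c)
                  = pr μ (fun ω => (h ω, f ω)) (c, a) := fun a =>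
                pr_congr' μ (fun ω => by simp only [Prod.ext_iff]; tauto)
              rw [Finset.sum_congr rfl (fun a _ => e2 a)]
              exact pr_fst' μ h f c
            calc ∑ a, ∑ b, pr μ (fun ω => (f ω, h ω)) (a, c) *
                  pr μ (fun ω => (g ω, h ω)) (b, c) / pr μ h c
                = ∑ a, pr μ (fun ω => (f ω, h ω)) (a, c) *
                    (∑ b, pr μ (fun ω => (g ω, h ω)) (b, c)) / pr μ h c := by
                  refine Finset.sum_congr rfl fun a _ => ?_
                  rw [Finset.mul_sum, Finset.sum_div]
              _ = ∑ a, pr μ (fun ω => (f ω, h ω)) (a, c) := by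
                  refine Finset.sum_congr rfl fun a _ => ?_
                  rw [mg, mul_div_assoc, div_self hc.ne', mul_one]
              _ = pr μ h c := mf
          simp only [Finset.sum_sub_distrib, m1, m2, le_refl]
      _ ≤ ∑ a, ∑ b, pr μ (fun ω => ((f ω, g ω), h ω)) ((a, b), c) *
            Real.log (pr μ (fun ω => ((f ω, g ω), h ω)) ((a, b), c) * pr μ h c /
              (pr μ (fun ω => (f ω, h ω)) (a, c) * pr μ (fun ω => (g ω, h ω)) (b, c))) :=
          Finset.sum_le_sum fun a _ => Finset.sum_le_sum fun b _ => key a b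

theorem cmi_eq_zero_of_ci {Ω X B C : Type*} [Fintype Ω] [Fintype X] [Fintype B] [Fintype C]
    [DecidableEq X] [DecidableEq B] [DecidableEq C]
    (μ : Ω → ℝ) (hμ : ∀ ω, 0 ≤ μ ω) (f : Ω → X) (g : Ω → B) (h : Ω → C)
    (hci : CondIndepRV μ f g h) : cmi μ g f h = 0 := by
  unfold cmi
  refine Finset.sum_eq_zero fun c _ => Finset.sum_eq_zero fun t _ => Finset.sum_eq_zero fun s _ => ?_
  rcases eq_or_lt_of_le (pr_nonneg' μ hμ (fun ω => ((g ω, f ω), h ω)) ((t, s), c)) with h0 | h0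
  · rw [← h0, zero_mul]
  · have hc : 0 < pr μ h c := lt_of_lt_of_le h0 (by
      rw [show pr μ (fun ω => ((g ω, f ω), h ω)) ((t, s), c)
          = pr μ (fun ω => (h ω, (g ω, f ω))) (c, (t, s)) from
        pr_congr' μ (fun ω => by simp only [Prod.ext_iff]; tauto)]
      exact pr_pair_le_fst' μ hμ h _ c (t, s))
    have e1 : pr μ (fun ω => ((f ω, g ω), h ω)) ((s, t), c)
        = pr μ (fun ω => ((g ω, f ω), h ω)) ((t, s), c) :=
      pr_congr' μ (fun ω => by simp only [Prod.ext_iff]; tauto)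
    have hkey := hci s t c hc
    rw [e1] at hkey
    rw [hkey, mul_comm (pr μ (fun ω => (f ω, h ω)) (s, c)), div_self (by
      have := mul_pos h0 hc
      rw [hkey] at this
      rw [mul_comm (pr μ (fun ω => (f ω, h ω)) (s, c))] at this
      exact this.ne'), Real.log_one, mul_zero]


/-- If `a` and `b` are conditionally independent given `(x, w)` and
`I(b; x ∣ (a, w)) > I(a; x ∣ w)`, then `I(x; (b, w)) > I(x; (a, w))`. -/
theorem mutual_information_exchange_lt
    {Ω X W A B : Type*} [Fintype Ω] [Fintype X] [Fintype W] [Fintype A] [Fintype B]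
    [DecidableEq X] [DecidableEq W] [DecidableEq A] [DecidableEq B]
    (μ : Ω → ℝ) (hμ : IsPMF μ)
    (x : Ω → X) (w : Ω → W) (a : Ω → A) (b : Ω → B)
    (hci : CondIndepRV μ a b (fun ω => (x ω, w ω)))
    (hgt : cmi μ a x w < cmi μ b x (fun ω => (a ω, w ω))) :
    mi μ x (fun ω => (a ω, w ω)) < mi μ x (fun ω => (b ω, w ω)) := by
  have hμ0 := hμ.1
  have h1 := mi_chain μ hμ0 x a w
  have h2 := mi_chain μ hμ0 x b w
  have h3 := cmi_chain μ hμ0 b x a w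
  have h4 := cmi_chain μ hμ0 b a x w
  have h5 := cmi_swap μ b x a w
  have h6 := cmi_eq_zero_of_ci μ hμ0 a b (fun ω => (x ω, w ω)) hci
  have h7 := cmi_nonneg μ hμ0 b a w
  rw [h1, h2]
  linarith [hgt]
end

section
/- Let x_1, …, x_N be vectors in R^D, let S = (1/N) Σ_{n=1}^N x_n x_nᵀ be their (uncentered) second-moment matrix, and let λ_1 ≥ λ_2 ≥ … ≥ λ_D be the eigenvalues of S in non-increasing order. For an orthonormal basis u_1, …, u_D of R^D define the ordered-autoencoder objective F(u_1, …, u_D) = (1/N) Σ_{n=1}^N (1/D) Σ_{j=1}^D ‖x_n − Σ_{k=1}^{j} ⟨u_k, x_n⟩ u_k‖². Then the minimum of F over all orthonormal bases of R^D equals (1/D) Σ_{k=1}^D (k−1) λ_k, and it is attained when each u_k is a unit eigenvector of S with eigenvalue λ_k (i.e., when the basis consists of the principal components of the data ordered by decreasing eigenvalue). -/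
open Finset Matrix

/-- The (uncentered) second-moment matrix `S = (1/N) ∑ₙ xₙ xₙᵀ` of the data `x`. -/
noncomputable def secondMoment (D N : ℕ) (x : Fin N → (Fin D → ℝ)) :
    Matrix (Fin D) (Fin D) ℝ :=
  (1 / N : ℝ) • ∑ n : Fin N, vecMulVec (x n) (x n)

/-- The residual `y - ∑_{k=1}^{i} ⟨u_k, y⟩ u_k` of `y` after reconstruction with the first `i`
basis vectors (the basis is 0-indexed, so this keeps indices `k < i`). -/
noncomputable def resid (D : ℕ) (u : Fin D → (Fin D → ℝ)) (i : ℕ) (y : Fin D → ℝ) :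
    Fin D → ℝ :=
  y - ∑ k ∈ Finset.univ.filter (fun k : Fin D => (k : ℕ) < i), (u k ⬝ᵥ y) • u k

/-- `u` is an orthonormal basis of `ℝ^D` (w.r.t. the Euclidean inner product). -/
def IsONB (D : ℕ) (u : Fin D → (Fin D → ℝ)) : Prop :=
  ∀ j k, u j ⬝ᵥ u k = if j = k then (1 : ℝ) else 0

/-- The ordered-autoencoder objective
`F(u) = (1/N) ∑ₙ (1/D) ∑_{j=1}^D ‖xₙ - ∑_{k=1}^{j} ⟨u_k, xₙ⟩ u_k‖²`. -/
noncomputable def oaeObj (D N : ℕ) (x : Fin N → (Fin D → ℝ)) (u : Fin D → (Fin D → ℝ)) : ℝ :=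
  (1 / N : ℝ) * ∑ n : Fin N, (1 / D : ℝ) * ∑ j : Fin D,
    resid D u (j.1 + 1) (x n) ⬝ᵥ resid D u (j.1 + 1) (x n)

lemma dot_S (D N : ℕ) (x : Fin N → Fin D → ℝ) (w z : Fin D → ℝ) :
    w ⬝ᵥ (secondMoment D N x *ᵥ z) = (1/N:ℝ) * ∑ n : Fin N, (w ⬝ᵥ x n) * (x n ⬝ᵥ z) := by
  simp only [secondMoment, dotProduct, mulVec, vecMulVec, Matrix.sum_apply, Matrix.smul_apply,
    Matrix.of_apply, Finset.mul_sum, Finset.sum_mul, smul_eq_mul]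
  conv_lhs => enter [2, a]; rw [Finset.sum_comm]
  rw [Finset.sum_comm]
  refine Finset.sum_congr rfl fun n _ => ?_
  rw [Finset.sum_comm]
  refine Finset.sum_congr rfl fun i _ => Finset.sum_congr rfl fun j _ => by ring

lemma dotProduct_fsum {D : ℕ} {ι : Type*} (s : Finset ι) (f : ι → Fin D → ℝ) (y : Fin D → ℝ) :
    y ⬝ᵥ (∑ i ∈ s, f i) = ∑ i ∈ s, y ⬝ᵥ f i := by
  simp only [dotProduct, Finset.sum_apply, Finset.mul_sum]
  exact Finset.sum_comm

lemma fsum_dotProduct {D : ℕ} {ι : Type*} (s : Finset ι) (f : ι → Fin D → ℝ) (y : Fin D → ℝ) :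
    (∑ i ∈ s, f i) ⬝ᵥ y = ∑ i ∈ s, f i ⬝ᵥ y := by
  rw [dotProduct_comm, dotProduct_fsum]
  simp [dotProduct_comm]

lemma onb_expand {D : ℕ} {w : Fin D → Fin D → ℝ} (hw : IsONB D w) (y : Fin D → ℝ) :
    ∑ i : Fin D, (w i ⬝ᵥ y) • w i = y := by
  have h1 : (Matrix.of w) * (Matrix.of w)ᵀ = 1 := by
    ext j k
    simpa [Matrix.mul_apply, dotProduct, Matrix.one_apply] using hw j k
  have h2 : (Matrix.of w)ᵀ * (Matrix.of w) = 1 := mul_eq_one_comm.mp h1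
  have hcomp : ∀ a b, ∑ i : Fin D, w i a * w i b = if a = b then (1:ℝ) else 0 := by
    intro a b
    have := congrFun (congrFun h2 a) b
    simpa [Matrix.mul_apply, Matrix.one_apply] using this
  funext a
  simp only [Finset.sum_apply, Pi.smul_apply, smul_eq_mul, dotProduct]
  calc ∑ i : Fin D, (∑ b : Fin D, w i b * y b) * w i a
      = ∑ i : Fin D, ∑ b : Fin D, w i b * y b * w i a := by
        exact Finset.sum_congr rfl fun i _ => Finset.sum_mul _ _ _
    _ = ∑ b : Fin D, ∑ i : Fin D, w i b * y b * w i a := Finset.sum_comm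
    _ = ∑ b : Fin D, (∑ i : Fin D, w i a * w i b) * y b := by
        refine Finset.sum_congr rfl fun b _ => ?_
        rw [Finset.sum_mul]
        exact Finset.sum_congr rfl fun i _ => by ring
    _ = y a := by simp [hcomp, ite_mul]

lemma parseval {D : ℕ} {w : Fin D → Fin D → ℝ} (hw : IsONB D w) (y z : Fin D → ℝ) :
    y ⬝ᵥ z = ∑ i : Fin D, (w i ⬝ᵥ y) * (w i ⬝ᵥ z) := by
  conv_lhs => rw [← onb_expand hw y]
  rw [fsum_dotProduct]
  refine Finset.sum_congr rfl fun i _ => ?_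
  rw [smul_dotProduct, smul_eq_mul, dotProduct_comm (w i) z]

lemma resid_dot {D : ℕ} {u : Fin D → Fin D → ℝ} (hu : IsONB D u) (m : ℕ) (y : Fin D → ℝ) :
    resid D u m y ⬝ᵥ resid D u m y
      = y ⬝ᵥ y - ∑ k ∈ Finset.univ.filter (fun k : Fin D => (k : ℕ) < m), (u k ⬝ᵥ y)^2 := by
  set F := Finset.univ.filter (fun k : Fin D => (k : ℕ) < m) with hF
  set s := ∑ k ∈ F, (u k ⬝ᵥ y) • u k with hs
  have hys : y ⬝ᵥ s = ∑ k ∈ F, (u k ⬝ᵥ y)^2 := by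
    rw [hs, dotProduct_fsum]
    refine Finset.sum_congr rfl fun k _ => ?_
    rw [dotProduct_smul, smul_eq_mul, dotProduct_comm y (u k), sq]
  have hsy : s ⬝ᵥ y = ∑ k ∈ F, (u k ⬝ᵥ y)^2 := by
    rw [dotProduct_comm, hys]
  have hss : s ⬝ᵥ s = ∑ k ∈ F, (u k ⬝ᵥ y)^2 := by
    rw [hs, fsum_dotProduct]
    refine Finset.sum_congr rfl fun k _ => ?_
    rw [smul_dotProduct, smul_eq_mul, dotProduct_fsum]
    rw [Finset.sum_eq_single k (fun l hl hlk => by rw [dotProduct_smul, hu k l]; simp [Ne.symm hlk])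
      (fun h => absurd ‹k ∈ F› h)]
    rw [dotProduct_smul, hu k k]
    simp [sq]
  show (y - s) ⬝ᵥ (y - s) = _
  rw [sub_dotProduct, dotProduct_sub, dotProduct_sub, hys, hsy, hss]
  ring

lemma avg_sq (D N : ℕ) (x : Fin N → Fin D → ℝ) (w : Fin D → ℝ) :
    (1/N:ℝ) * ∑ n : Fin N, (w ⬝ᵥ x n)^2 = w ⬝ᵥ (secondMoment D N x *ᵥ w) := by
  rw [dot_S]
  congr 1
  exact Finset.sum_congr rfl fun n _ => by rw [dotProduct_comm (x n) w, sq]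

lemma lam_eq_dot {D N : ℕ} {x : Fin N → Fin D → ℝ} {lam : Fin D → ℝ}
    {v : Fin D → Fin D → ℝ} (hv : IsONB D v)
    (hev : ∀ k, (secondMoment D N x) *ᵥ v k = lam k • v k) (i : Fin D) :
    v i ⬝ᵥ (secondMoment D N x *ᵥ v i) = lam i := by
  rw [hev, dotProduct_smul, smul_eq_mul, hv i i]
  simp

lemma lam_nonneg {D N : ℕ} {x : Fin N → Fin D → ℝ} {lam : Fin D → ℝ}
    {v : Fin D → Fin D → ℝ} (hv : IsONB D v)
    (hev : ∀ k, (secondMoment D N x) *ᵥ v k = lam k • v k) (i : Fin D) :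
    0 ≤ lam i := by
  rw [← lam_eq_dot hv hev i, ← avg_sq]
  positivity

lemma trace_eq {D N : ℕ} {x : Fin N → Fin D → ℝ} {lam : Fin D → ℝ}
    {v : Fin D → Fin D → ℝ} (hv : IsONB D v)
    (hev : ∀ k, (secondMoment D N x) *ᵥ v k = lam k • v k) :
    (1/N:ℝ) * ∑ n : Fin N, x n ⬝ᵥ x n = ∑ i : Fin D, lam i := by
  calc (1/N:ℝ) * ∑ n : Fin N, x n ⬝ᵥ x n
      = (1/N:ℝ) * ∑ n : Fin N, ∑ i : Fin D, (v i ⬝ᵥ x n)^2 := by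
        congr 1
        exact Finset.sum_congr rfl fun n _ => by
          rw [parseval hv (x n) (x n)]
          exact Finset.sum_congr rfl fun i _ => (sq _).symm
    _ = ∑ i : Fin D, (1/N:ℝ) * ∑ n : Fin N, (v i ⬝ᵥ x n)^2 := by
        rw [Finset.sum_comm (γ := Fin N), Finset.mul_sum]
    _ = ∑ i : Fin D, lam i := by
        refine Finset.sum_congr rfl fun i _ => ?_
        rw [avg_sq, lam_eq_dot hv hev i]

lemma kyfan {D N : ℕ} {x : Fin N → Fin D → ℝ} {lam : Fin D → ℝ} (hlam : Antitone lam)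
    {v : Fin D → Fin D → ℝ} (hv : IsONB D v)
    (hev : ∀ k, (secondMoment D N x) *ᵥ v k = lam k • v k)
    {u : Fin D → Fin D → ℝ} (hu : IsONB D u) (m : ℕ) :
    ∑ k ∈ Finset.univ.filter (fun k : Fin D => (k : ℕ) < m), u k ⬝ᵥ (secondMoment D N x *ᵥ u k)
      ≤ ∑ k ∈ Finset.univ.filter (fun k : Fin D => (k : ℕ) < m), lam k := by
  set S := secondMoment D N x with hS
  set F := Finset.univ.filter (fun k : Fin D => (k : ℕ) < m) with hF
  set c : Fin D → Fin D → ℝ := fun k i => v i ⬝ᵥ u k with hc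
  have hq : ∀ k, u k ⬝ᵥ (S *ᵥ u k) = ∑ i : Fin D, lam i * (c k i)^2 := by
    intro k
    have h1 : S *ᵥ u k = ∑ i : Fin D, c k i • (lam i • v i) := by
      conv_lhs => rw [← onb_expand hv (u k)]
      rw [← Matrix.mulVecLin_apply, map_sum]
      exact Finset.sum_congr rfl fun i _ => by
        rw [_root_.map_smul, Matrix.mulVecLin_apply, hev i]
    rw [h1, dotProduct_fsum]
    refine Finset.sum_congr rfl fun i _ => ?_
    rw [dotProduct_smul, dotProduct_smul, smul_eq_mul, smul_eq_mul,
      dotProduct_comm (u k) (v i)]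
    show c k i * (lam i * c k i) = _
    ring
  set t : Fin D → ℝ := fun i => ∑ k ∈ F, (c k i)^2 with ht
  have ht0 : ∀ i, 0 ≤ t i := fun i => Finset.sum_nonneg fun k _ => sq_nonneg _
  have hc_all : ∀ i, ∑ k : Fin D, (c k i)^2 = 1 := by
    intro i
    have h : ∑ k : Fin D, (u k ⬝ᵥ v i) * (u k ⬝ᵥ v i) = 1 := by
      rw [← parseval hu, hv i i, if_pos rfl]
    calc ∑ k : Fin D, (c k i)^2
        = ∑ k : Fin D, (u k ⬝ᵥ v i) * (u k ⬝ᵥ v i) := by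
          refine Finset.sum_congr rfl fun k _ => ?_
          rw [sq]
          show (v i ⬝ᵥ u k) * (v i ⬝ᵥ u k) = _
          rw [dotProduct_comm (v i) (u k)]
      _ = 1 := h
  have ht1 : ∀ i, t i ≤ 1 := fun i => by
    rw [← hc_all i]
    exact Finset.sum_le_sum_of_subset_of_nonneg (Finset.subset_univ _)
      (fun k _ _ => sq_nonneg _)
  have hsumT : ∑ i : Fin D, t i = ∑ k ∈ F, (1:ℝ) := by
    show ∑ i : Fin D, ∑ k ∈ F, (c k i)^2 = _
    rw [Finset.sum_comm]
    refine Finset.sum_congr rfl fun k _ => ?_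
    have h : ∑ i : Fin D, (v i ⬝ᵥ u k) * (v i ⬝ᵥ u k) = 1 := by
      rw [← parseval hv, hu k k, if_pos rfl]
    calc ∑ i : Fin D, (c k i)^2
        = ∑ i : Fin D, (v i ⬝ᵥ u k) * (v i ⬝ᵥ u k) :=
          Finset.sum_congr rfl fun i _ => by rw [sq]
      _ = 1 := h
  have hLHS : ∑ k ∈ F, u k ⬝ᵥ (S *ᵥ u k) = ∑ i : Fin D, lam i * t i := by
    calc ∑ k ∈ F, u k ⬝ᵥ (S *ᵥ u k)
        = ∑ k ∈ F, ∑ i : Fin D, lam i * (c k i)^2 := Finset.sum_congr rfl fun k _ => hq k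
      _ = ∑ i : Fin D, ∑ k ∈ F, lam i * (c k i)^2 := Finset.sum_comm
      _ = ∑ i : Fin D, lam i * t i := Finset.sum_congr rfl fun i _ => (Finset.mul_sum _ _ _).symm
  set μ : ℝ := if h : m < D then lam ⟨m, h⟩ else 0 with hμ
  have hμ_le : ∀ i : Fin D, (i:ℕ) < m → μ ≤ lam i := by
    intro i hi
    rw [hμ]
    split
    · next h => exact hlam (show i ≤ ⟨m, h⟩ from Fin.le_def.mpr (le_of_lt hi))
    · exact lam_nonneg hv hev i
  have hμ_ge : ∀ i : Fin D, ¬ (i:ℕ) < m → lam i ≤ μ := by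
    intro i hi
    have hmD : m < D := lt_of_le_of_lt (not_lt.mp hi) i.2
    rw [hμ, dif_pos hmD]
    exact hlam (Fin.le_def.mpr (not_lt.mp hi))
  rw [hLHS]
  have hsplit : ∑ i : Fin D, lam i * t i
      = ∑ i ∈ F, lam i * t i + ∑ i ∈ Finset.univ.filter (fun i : Fin D => ¬ (i:ℕ) < m), lam i * t i := by
    rw [hF]
    exact (Finset.sum_filter_add_sum_filter_not _ _ _).symm
  have hsplitT : ∑ i : Fin D, t i
      = ∑ i ∈ F, t i + ∑ i ∈ Finset.univ.filter (fun i : Fin D => ¬ (i:ℕ) < m), t i := by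
    rw [hF]
    exact (Finset.sum_filter_add_sum_filter_not _ _ _).symm
  set Fc := Finset.univ.filter (fun i : Fin D => ¬ (i:ℕ) < m) with hFc
  have b1 : ∑ i ∈ F, lam i * t i ≤ ∑ i ∈ F, (lam i - μ * (1 - t i)) := by
    refine Finset.sum_le_sum fun i hi => ?_
    have h1 : μ ≤ lam i := hμ_le i (by simpa [hF] using hi)
    have h2 := ht1 i
    nlinarith
  have b2 : ∑ i ∈ Fc, lam i * t i ≤ ∑ i ∈ Fc, μ * t i := by
    refine Finset.sum_le_sum fun i hi => ?_
    exact mul_le_mul_of_nonneg_right (hμ_ge i (by simpa [hFc] using hi)) (ht0 i)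
  have hbal : ∑ i ∈ F, t i + ∑ i ∈ Fc, t i = ∑ i ∈ F, (1:ℝ) := by
    rw [← hsplitT, hsumT]
  have e1 : ∑ i ∈ F, (lam i - μ * (1 - t i))
      = ∑ i ∈ F, lam i - μ * ∑ i ∈ Fc, t i := by
    have h3 : ∑ i ∈ F, ((1:ℝ) - t i) = ∑ i ∈ Fc, t i := by
      rw [Finset.sum_sub_distrib]
      linarith [hbal]
    rw [Finset.sum_sub_distrib, ← Finset.mul_sum, h3]
  have e2 : ∑ i ∈ Fc, μ * t i = μ * ∑ i ∈ Fc, t i := (Finset.mul_sum _ _ _).symm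
  linarith [hsplit, b1, b2, e1, e2]

lemma obj_formula {D N : ℕ} {x : Fin N → Fin D → ℝ} {u : Fin D → Fin D → ℝ}
    (hu : IsONB D u) :
    oaeObj D N x u = (1/D:ℝ) * ∑ j : Fin D,
      ((1/N:ℝ) * ∑ n : Fin N, x n ⬝ᵥ x n
        - ∑ k ∈ Finset.univ.filter (fun k : Fin D => (k : ℕ) < (j:ℕ)+1),
            u k ⬝ᵥ (secondMoment D N x *ᵥ u k)) := by
  have hterm : ∀ j : Fin D,
      (1/N:ℝ) * ∑ n : Fin N, x n ⬝ᵥ x n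
        - ∑ k ∈ Finset.univ.filter (fun k : Fin D => (k : ℕ) < (j:ℕ)+1),
            u k ⬝ᵥ (secondMoment D N x *ᵥ u k)
      = (1/N:ℝ) * ∑ n : Fin N, (x n ⬝ᵥ x n
          - ∑ k ∈ Finset.univ.filter (fun k : Fin D => (k : ℕ) < (j:ℕ)+1), (u k ⬝ᵥ x n)^2) := by
    intro j
    have h1 : ∑ k ∈ Finset.univ.filter (fun k : Fin D => (k : ℕ) < (j:ℕ)+1),
        u k ⬝ᵥ (secondMoment D N x *ᵥ u k)
        = (1/N:ℝ) * ∑ n : Fin N,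
            ∑ k ∈ Finset.univ.filter (fun k : Fin D => (k : ℕ) < (j:ℕ)+1), (u k ⬝ᵥ x n)^2 := by
      calc ∑ k ∈ Finset.univ.filter (fun k : Fin D => (k : ℕ) < (j:ℕ)+1),
            u k ⬝ᵥ (secondMoment D N x *ᵥ u k)
          = ∑ k ∈ Finset.univ.filter (fun k : Fin D => (k : ℕ) < (j:ℕ)+1),
              (1/N:ℝ) * ∑ n : Fin N, (u k ⬝ᵥ x n)^2 :=
            Finset.sum_congr rfl fun k _ => (avg_sq D N x (u k)).symm
        _ = (1/N:ℝ) * ∑ k ∈ Finset.univ.filter (fun k : Fin D => (k : ℕ) < (j:ℕ)+1),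
              ∑ n : Fin N, (u k ⬝ᵥ x n)^2 := by rw [Finset.mul_sum]
        _ = _ := by rw [Finset.sum_comm]
    rw [h1, Finset.sum_sub_distrib, mul_sub]
  unfold oaeObj
  simp only [resid_dot hu]
  rw [← Finset.mul_sum]
  conv_rhs => enter [2, 2, j]; rw [hterm j]
  rw [show ∑ j : Fin D, (1/N:ℝ) * ∑ n : Fin N, (x n ⬝ᵥ x n
      - ∑ k ∈ Finset.univ.filter (fun k : Fin D => (k : ℕ) < (j:ℕ)+1), (u k ⬝ᵥ x n)^2)
      = (1/N:ℝ) * ∑ j : Fin D, ∑ n : Fin N, (x n ⬝ᵥ x n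
      - ∑ k ∈ Finset.univ.filter (fun k : Fin D => (k : ℕ) < (j:ℕ)+1), (u k ⬝ᵥ x n)^2)
    from (Finset.mul_sum _ _ _).symm, Finset.sum_comm (γ := Fin N)]
  ring

lemma count_swap (D : ℕ) (f : Fin D → ℝ) :
    ∑ j : Fin D, ∑ k ∈ Finset.univ.filter (fun k : Fin D => (k : ℕ) < (j:ℕ)+1), f k
      = ∑ k : Fin D, ((D:ℝ) - ((k:ℕ):ℝ)) * f k := by
  calc ∑ j : Fin D, ∑ k ∈ Finset.univ.filter (fun k : Fin D => (k : ℕ) < (j:ℕ)+1), f k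
      = ∑ j : Fin D, ∑ k : Fin D, (if (k:ℕ) < (j:ℕ)+1 then f k else 0) :=
        Finset.sum_congr rfl fun j _ => (Finset.sum_filter _ _)
    _ = ∑ k : Fin D, ∑ j : Fin D, (if (k:ℕ) < (j:ℕ)+1 then f k else 0) := Finset.sum_comm
    _ = ∑ k : Fin D, ((D:ℝ) - ((k:ℕ):ℝ)) * f k := by
        refine Finset.sum_congr rfl fun k _ => ?_
        rw [Fin.sum_univ_eq_sum_range (fun j => if (k:ℕ) < j+1 then f k else 0)]
        rw [← Finset.sum_filter]
        have h3 : (Finset.range D).filter (fun j => (k:ℕ) < j+1) = Finset.Ico (k:ℕ) D := by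
          ext a
          simp only [Finset.mem_filter, Finset.mem_range, Finset.mem_Ico]
          omega
        rw [h3, Finset.sum_const, Nat.card_Ico, nsmul_eq_mul, Nat.cast_sub (le_of_lt k.2)]

lemma target_eq (D : ℕ) (lam : Fin D → ℝ) (C : ℝ) (hC : C = ∑ i : Fin D, lam i) :
    (1/D:ℝ) * ∑ j : Fin D,
        (C - ∑ k ∈ Finset.univ.filter (fun k : Fin D => (k : ℕ) < (j:ℕ)+1), lam k)
      = (1/D:ℝ) * ∑ k : Fin D, ((k : ℕ) : ℝ) * lam k := by
  congr 1
  rw [Finset.sum_sub_distrib, count_swap, Finset.sum_const, Finset.card_univ, Fintype.card_fin,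
    nsmul_eq_mul, hC, Finset.mul_sum, ← Finset.sum_sub_distrib]
  exact Finset.sum_congr rfl fun k _ => by ring

/-- Let `S = (1/N) ∑ₙ xₙ xₙᵀ` with eigenvalues `λ₁ ≥ … ≥ λ_D` in
non-increasing order (witnessed by an orthonormal eigenbasis `v`). The minimum of the
ordered-autoencoder objective `F` over all orthonormal bases of `ℝ^D` equals
`(1/D) ∑_{k=1}^D (k-1) λₖ`, and it is attained when each `uₖ` is a unit eigenvector of `S`
with eigenvalue `λₖ` (i.e., at the principal components ordered by decreasing eigenvalue).
(The basis is 0-indexed: `u k` is the `(k+1)`-st basis vector, so `(k+1)-1 = (k : ℕ)`.) -/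
theorem ordered_autoencoder_pca_optimal
    (D N : ℕ) (x : Fin N → (Fin D → ℝ))
    (lam : Fin D → ℝ) (hlam : Antitone lam)
    (v : Fin D → (Fin D → ℝ)) (hv : IsONB D v)
    (hev : ∀ k, (secondMoment D N x) *ᵥ v k = lam k • v k) :
    IsLeast {s : ℝ | ∃ u : Fin D → (Fin D → ℝ), IsONB D u ∧ s = oaeObj D N x u}
      ((1 / D : ℝ) * ∑ k : Fin D, ((k : ℕ) : ℝ) * lam k) ∧
    (∀ u : Fin D → (Fin D → ℝ), IsONB D u →
      (∀ k, (secondMoment D N x) *ᵥ u k = lam k • u k) →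
      oaeObj D N x u = (1 / D : ℝ) * ∑ k : Fin D, ((k : ℕ) : ℝ) * lam k) := by
  have hC := trace_eq hv hev
  have part2 : ∀ u : Fin D → (Fin D → ℝ), IsONB D u →
      (∀ k, (secondMoment D N x) *ᵥ u k = lam k • u k) →
      oaeObj D N x u = (1 / D : ℝ) * ∑ k : Fin D, ((k : ℕ) : ℝ) * lam k := by
    intro u hu hevu
    rw [obj_formula hu]
    have hq : ∀ k : Fin D, u k ⬝ᵥ (secondMoment D N x *ᵥ u k) = lam k := by
      intro k
      rw [hevu k, dotProduct_smul, smul_eq_mul, hu k k]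
      simp
    simp only [hq]
    exact target_eq D lam _ hC
  refine ⟨⟨⟨v, hv, (part2 v hv hev).symm⟩, ?_⟩, part2⟩
  rintro s ⟨u, hu, rfl⟩
  rw [obj_formula hu, ← target_eq D lam _ hC]
  have h0 : (0:ℝ) ≤ 1/D := by positivity
  refine mul_le_mul_of_nonneg_left (Finset.sum_le_sum fun j _ => ?_) h0
  exact sub_le_sub_left (kyfan hlam hv hev hu ((j:ℕ)+1)) _
end
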